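/- Let 0 ≤ σ < 1, n ≥ 1, s ≥ 1 be given, and suppose a_k ≥ 0 satisfies a_k ≤ min(2, √n · σ^k) for all k ≥ 1. Then ∑_{k=1}^{s-1} a_k ≤ 2·log(s√n)/(1 - σ) + 1. -/

import Mathlib

/-!
Split the sum at `m = ⌊log (s√n) / (1 - σ)⌋`. The first `m` terms are at most `2` each. Since
`σ ≤ exp (σ - 1)`, every later term is at most `√n σ^k ≤ √n exp (-k (1 - σ)) ≤ √n / (s√n) = 1/s`,
so the remaining fewer than `s` terms contribute at most `1`.
-/

open Finset Real

theorem sum_Icc_one_le_of_head_tail {a : ℕ → ℝ} {B ε : ℝ} (hB : 0 ≤ B) (hε : 0 ≤ ε) {m N : ℕ}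
    (head : ∀ k, 1 ≤ k → k ≤ m → a k ≤ B) (tail : ∀ k, m < k → k ≤ N → a k ≤ ε) :
    ∑ k ∈ Icc 1 N, a k ≤ m * B + N * ε := by
  set j := min m N
  have hsplit : ∑ k ∈ Icc 1 N, a k = ∑ k ∈ Ioc 0 j, a k + ∑ k ∈ Ioc j N, a k := by
    rw [sum_Ioc_consecutive a (Nat.zero_le j) (min_le_right m N), ← Icc_add_one_left_eq_Ioc,
      zero_add]
  have hhead : ∑ k ∈ Ioc 0 j, a k ≤ j * B := by
    simpa using sum_le_card_nsmul (Ioc 0 j) a B fun k hk => by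
      simp only [mem_Ioc] at hk
      exact head k hk.1 (hk.2.trans (min_le_left m N))
  have htail : ∑ k ∈ Ioc j N, a k ≤ (N - j : ℕ) * ε := by
    simpa using sum_le_card_nsmul (Ioc j N) a ε fun k hk => by
      simp only [mem_Ioc] at hk
      exact tail k ((min_lt_iff.mp hk.1).resolve_right hk.2.not_gt) hk.2
  have hj : (j : ℝ) ≤ m := by exact_mod_cast min_le_left m N
  have hNj : ((N - j : ℕ) : ℝ) ≤ N := by exact_mod_cast Nat.sub_le N j
  rw [hsplit]
  linarith [mul_le_mul_of_nonneg_right hj hB, mul_le_mul_of_nonneg_right hNj hε]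

theorem pow_le_exp_neg_mul_one_sub {σ : ℝ} (hσ : 0 ≤ σ) (k : ℕ) :
    σ ^ k ≤ exp (-(k * (1 - σ))) := by
  have hσexp : σ ≤ exp (σ - 1) := by linarith [add_one_le_exp (σ - 1)]
  calc σ ^ k ≤ exp (σ - 1) ^ k := pow_le_pow_left₀ hσ hσexp k
    _ = exp (-(k * (1 - σ))) := by rw [← exp_nat_mul]; ring_nf

theorem pow_le_exp_neg_of_floor_lt {σ L : ℝ} (hσ0 : 0 ≤ σ) (hσ1 : σ < 1) {k : ℕ}
    (hk : ⌊L / (1 - σ)⌋₊ < k) : σ ^ k ≤ exp (-L) := by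
  have hL : L < k * (1 - σ) := (div_lt_iff₀ (sub_pos.mpr hσ1)).mp (Nat.lt_of_floor_lt hk)
  exact (pow_le_exp_neg_mul_one_sub hσ0 k).trans (exp_le_exp.mpr (by linarith))

theorem cumulative_mixing_bound_general (σ : ℝ) (hσ0 : 0 ≤ σ) (hσ1 : σ < 1)
    (n s : ℕ) (hn : 1 ≤ n) (hs : 1 ≤ s)
    (a : ℕ → ℝ)
    (ha : ∀ k, 1 ≤ k → a k ≤ min 2 (Real.sqrt n * σ ^ k)) :
    ∑ k ∈ Finset.Icc 1 (s - 1), a k ≤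
      2 * Real.log (s * Real.sqrt n) / (1 - σ) + 1 := by
  set L := log (s * √n)
  have hsqrt : 1 ≤ √(n : ℝ) := one_le_sqrt.mpr (by exact_mod_cast hn)
  have hs' : (1 : ℝ) ≤ s := by exact_mod_cast hs
  have hsn : 1 ≤ (s : ℝ) * √n := one_le_mul_of_one_le_of_one_le hs' hsqrt
  have hm : (⌊L / (1 - σ)⌋₊ : ℝ) ≤ L / (1 - σ) :=
    Nat.floor_le (div_nonneg (log_nonneg hsn) (by linarith))
  have tail : ∀ k, ⌊L / (1 - σ)⌋₊ < k → k ≤ s - 1 → a k ≤ 1 / s := fun k hk _ =>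
    calc a k ≤ √n * σ ^ k := (ha k (by omega)).trans (min_le_right _ _)
      _ ≤ √n * exp (-L) := by gcongr; exact pow_le_exp_neg_of_floor_lt hσ0 hσ1 hk
      _ = 1 / s := by rw [exp_neg, exp_log (by positivity)]; field_simp
  have hcount : ((s - 1 : ℕ) : ℝ) * (1 / s) ≤ 1 := by
    rw [Nat.cast_sub hs, Nat.cast_one, mul_one_div, div_le_one (by positivity)]
    linarith
  calc ∑ k ∈ Icc 1 (s - 1), a k ≤ ⌊L / (1 - σ)⌋₊ * 2 + (s - 1 : ℕ) * (1 / s) :=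
        sum_Icc_one_le_of_head_tail (by norm_num) (by positivity)
          (fun k hk _ => (ha k hk).trans (min_le_left _ _)) tail
    _ ≤ 2 * L / (1 - σ) + 1 := by rw [mul_div_assoc]; linarith

theorem cumulative_mixing_bound (σ : ℝ) (hσ0 : 0 ≤ σ) (hσ1 : σ < 1)
    (n s : ℕ) (hn : 1 ≤ n) (hs : 1 ≤ s)
    (a : ℕ → ℝ) (ha0 : ∀ k, 1 ≤ k → 0 ≤ a k)
    (ha : ∀ k, 1 ≤ k → a k ≤ min 2 (Real.sqrt n * σ ^ k)) :
    ∑ k ∈ Finset.Icc 1 (s - 1), a k ≤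
      2 * Real.log (s * Real.sqrt n) / (1 - σ) + 1 :=
  cumulative_mixing_bound_general σ hσ0 hσ1 n s hn hs a ha
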